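/- arXiv:2205.14436 — 2 statements merged into one kernel-verified Lean document; each statement's English description precedes it below -/
import Mathlib

section
/- The Hilbert series of the Stanley-Reisner ring k[F] of a quasi-forest F = F_1 ∪ ⋯ ∪ F_k, where each F_i is a simplex of dimension d_i and G_i = (F_1 ∪ ⋯ ∪ F_{i-1}) ∩ F_i is a simplex of dimension r_i (for 2 ≤ i ≤ k), equals ∑_{i=1}^k 1/(1-t)^{d_i+1} − ∑_{i=2}^k 1/(1-t)^{r_i+1}. -/
/-- Data of a quasi-forest on vertex type `V`: an ordered list of facets
`F 0, …, F (k-1)` of a simplicial complex, where each facet meets the union of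
the previous ones in a subset of one of them (so the intersection is a common
face, i.e. a simplex, possibly empty), and no facet is contained in another. -/
structure QuasiForest (V : Type*) [DecidableEq V] (k : ℕ) where
  F : Fin k → Finset V
  facet : ∀ i j : Fin k, i ≠ j → ¬ F i ⊆ F j
  attach : ∀ i : Fin k, 0 < (i : ℕ) →
    ∃ j < i, ((Finset.univ.filter (fun j : Fin k => j < i)).biUnion F) ∩ F i ⊆ F j

namespace QuasiForest
open scoped Classical

variable {V : Type*} [DecidableEq V] {k : ℕ} (Q : QuasiForest V k)

/-- The attachment face `G i = (F 0 ∪ ⋯ ∪ F (i-1)) ∩ F i`. -/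
def G (i : Fin k) : Finset V :=
  ((Finset.univ.filter (fun j : Fin k => j < i)).biUnion Q.F) ∩ Q.F i

/-- The faces of the quasi-forest: all subsets of the facets. -/
def faces : Set (Finset V) := {s | ∃ i, s ⊆ Q.F i}

/-- The vertex set of the quasi-forest. -/
def verts : Finset V := Finset.univ.biUnion Q.F

/-- `minG = r + 1`, the minimal number of vertices of an attachment face
(`r = min rᵢ` is its minimal dimension). -/
noncomputable def minG : ℕ := sInf {n | ∃ i : Fin k, 0 < (i : ℕ) ∧ (Q.G i).card = n}

/-- The non-neighbours of `v` among the vertices: the neighbours of `v` in the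
complement of the 1-skeleton. -/
noncomputable def nonNbrs [Fintype V] (v : V) : Finset V :=
  (Q.verts.erase v).filter (fun u => ({v, u} : Finset V) ∉ Q.faces)


end QuasiForest

/-- The Stanley–Reisner ideal of a simplicial complex `Δ` (given by its set of
faces): generated by the squarefree monomials corresponding to non-faces. -/
noncomputable def SRIdeal (kk : Type*) [Field kk] {V : Type*} (Δ : Set (Finset V)) :
    Ideal (MvPolynomial V kk) :=
  Ideal.span {m | ∃ s : Finset V, s ∉ Δ ∧ m = ∏ v ∈ s, MvPolynomial.X v}

/-- The Stanley–Reisner ring `k[Δ]`. -/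
abbrev SRRing (kk : Type*) [Field kk] {V : Type*} (Δ : Set (Finset V)) :=
  MvPolynomial V kk ⧸ SRIdeal kk Δ

open CategoryTheory in
/-- The projective dimension of a module: the least `n` (possibly `⊤`, i.e. no
such `n`) such that `M` admits a projective resolution of length `n`. -/
noncomputable def projDim (R : Type*) [Ring R] (M : ModuleCat R) : ℕ∞ :=
  sInf {n : ℕ∞ | ∃ P : ProjectiveResolution M,
    ∀ i : ℕ, n < (i : ℕ∞) → Limits.IsZero (P.complex.X i)}

/-- The `I`-depth of a module `M`: the supremum of lengths of `M`-regular
sequences with entries in `I`. -/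
noncomputable def idealDepth {R : Type*} [CommRing R] (I : Ideal R)
    (M : Type*) [AddCommGroup M] [Module R M] : ℕ∞ :=
  sSup {n : ℕ∞ | ∃ rs : List R, (rs.length : ℕ∞) = n ∧ (∀ x ∈ rs, x ∈ I) ∧
    RingTheory.Sequence.IsRegular M rs}

/-- The irrelevant maximal ideal of a polynomial ring. -/
noncomputable def irrel (kk : Type*) [Field kk] (V : Type*) : Ideal (MvPolynomial V kk) :=
  Ideal.span (Set.range MvPolynomial.X)

/-- The dimension over `k` of the `i`-th graded piece of `S/I`. -/
noncomputable def hilbertCoeff (kk : Type*) [Field kk] {V : Type*}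
    (I : Ideal (MvPolynomial V kk)) (i : ℕ) : ℕ :=
  Module.finrank kk (Submodule.map (Ideal.Quotient.mkₐ kk I).toLinearMap
    (MvPolynomial.homogeneousSubmodule V kk i))

/-- The Hilbert series `∑ᵢ dim_k (S/I)ᵢ tⁱ` of `S/I`, as a power series over `ℚ`. -/
noncomputable def hilbertSeries (kk : Type*) [Field kk] {V : Type*}
    (I : Ideal (MvPolynomial V kk)) : PowerSeries ℚ :=
  PowerSeries.mk fun i => (hilbertCoeff kk I i : ℚ)


/-!
Since a simplicial complex `Δ` is closed under subsets, its Stanley–Reisner ideal consists of the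
polynomials all of whose monomials are supported on non-faces, so the degree-`n` part of `k[Δ]`
has as a basis the monomials of degree `n` supported on a face. The monomials of degree `n` in `m`
variables are counted by the `n`-th coefficient of `(1 - t)⁻ᵐ`. For a quasi-forest, a face `s`
lies in the facets `F i` with `i` in a nonempty index set `A`, and `s ⊆ G i` (with `i > 0`) exactly
when `i ∈ A` is not the least element of `A`. So counting face-supported monomials once per facet
containing their support overcounts each one by the number of attachment faces containing it.
-/

open Finset

namespace PowerSeries

variable {K : Type*} [Field K]

theorem inv_one_sub_pow_eq_invOneSubPow (m : ℕ) :
    (1 - X : K⟦X⟧)⁻¹ ^ m = (invOneSubPow K m : K⟦X⟧) := by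
  rw [← inv_inv (invOneSubPow K m), ← Units.mul_eq_one_iff_eq_inv, ← Units.inv_eq_val_inv,
    invOneSubPow_inv_eq_one_sub_pow, ← mul_pow, PowerSeries.inv_mul_cancel _ (by simp), one_pow]

theorem coeff_inv_one_sub_pow (m n : ℕ) :
    coeff n ((1 - X : K⟦X⟧)⁻¹ ^ m) = (m + n - 1).choose n := by
  rw [inv_one_sub_pow_eq_invOneSubPow]
  rcases m with _ | m
  · rcases n with _ | n <;> simp [invOneSubPow_zero, coeff_one]
  · rw [invOneSubPow_val_succ_eq_mk_add_choose, coeff_mk, Nat.add_right_comm, Nat.add_sub_cancel,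
      Nat.choose_symm_add]

theorem coeff_inv_one_sub_pow_card {ι : Type*} [DecidableEq ι] (s : Finset ι) (n : ℕ) :
    coeff n ((1 - X : K⟦X⟧)⁻¹ ^ #s) = #(s.finsuppAntidiag n) := by
  rw [coeff_inv_one_sub_pow, card_finsuppAntidiag_nat_eq_choose]

end PowerSeries

namespace Finset

theorem finsuppAntidiag_eq_filter_of_subset {ι μ : Type*} [DecidableEq ι] [AddCommMonoid μ]
    [HasAntidiagonal μ] [DecidableEq μ] {s t : Finset ι} (h : s ⊆ t) (n : μ) :
    s.finsuppAntidiag n = (t.finsuppAntidiag n).filter (·.support ⊆ s) := by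
  ext f
  simp only [mem_filter, mem_finsuppAntidiag']
  exact ⟨fun ⟨hf, hs⟩ => ⟨⟨hf, hs.trans h⟩, hs⟩, fun ⟨⟨hf, _⟩, hs⟩ => ⟨hf, hs⟩⟩

theorem filter_exists_lt_eq_erase_min' {α : Type*} [LinearOrder α] {A : Finset α}
    [DecidablePred fun i => ∃ j ∈ A, j < i] (hA : A.Nonempty) :
    A.filter (fun i => ∃ j ∈ A, j < i) = A.erase (A.min' hA) := by
  ext i
  simp only [mem_filter, mem_erase]
  constructor
  · rintro ⟨hi, j, hj, hji⟩
    exact ⟨(A.min'_le j hj).trans_lt hji |>.ne', hi⟩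
  · rintro ⟨hne, hi⟩
    exact ⟨hi, A.min' hA, A.min'_mem hA, (A.min'_le i hi).lt_of_ne hne.symm⟩

end Finset

theorem Finsupp.sum_single_one_le_iff {V : Type*} [DecidableEq V] (s : Finset V) (d : V →₀ ℕ) :
    ∑ v ∈ s, single v 1 ≤ d ↔ s ⊆ d.support := by
  simp only [le_def, finsetSum_apply, single_apply, Finset.sum_ite_eq']
  refine ⟨fun h v hv => ?_, fun h v => ?_⟩
  · simpa [Nat.one_le_iff_ne_zero, hv] using h v
  · split_ifs with hv
    · exact Nat.one_le_iff_ne_zero.2 (mem_support_iff.1 (h hv))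
    · exact Nat.zero_le _

namespace MvPolynomial

variable {R σ : Type*} [CommSemiring R]

theorem restrictSupport_union (s t : Set (σ →₀ ℕ)) :
    restrictSupport R (s ∪ t) = restrictSupport R s ⊔ restrictSupport R t := by
  simp only [restrictSupport_eq_span, Set.image_union, Submodule.span_union]

theorem disjoint_restrictSupport {s t : Set (σ →₀ ℕ)} (h : Disjoint s t) :
    Disjoint (restrictSupport R s) (restrictSupport R t) := by
  rw [Submodule.disjoint_def]
  intro p hs ht
  rw [mem_restrictSupport_iff] at hs ht
  have := h.mono hs ht
  rwa [disjoint_self, Set.bot_eq_empty, Finset.coe_eq_empty, support_eq_empty] at this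

end MvPolynomial

section StanleyReisner

open MvPolynomial

variable {kk : Type*} [Field kk] {V : Type*} {Δ : Set (Finset V)}

theorem SRIdeal_eq_span_monomial :
    SRIdeal kk Δ =
      Ideal.span ((monomial · 1) '' ((fun s => ∑ v ∈ s, Finsupp.single v 1) '' Δᶜ)) := by
  rw [SRIdeal, Set.image_image]
  congr 1
  ext m
  simp only [Set.mem_ofPred_eq, Set.mem_image, Set.mem_compl_iff, monomial_sum_one]
  exact ⟨fun ⟨s, hs, hm⟩ => ⟨s, hs, hm.symm⟩, fun ⟨s, hs, hm⟩ => ⟨s, hs, hm.symm⟩⟩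

theorem restrictScalars_SRIdeal (hΔ : IsLowerSet Δ) :
    (SRIdeal kk Δ).restrictScalars kk = restrictSupport kk {d | d.support ∉ Δ} := by
  classical
  ext p
  rw [Submodule.restrictScalars_mem, SRIdeal_eq_span_monomial, mem_ideal_span_monomial_image,
    mem_restrictSupport_iff]
  simp only [Set.exists_mem_image, Set.mem_compl_iff, Finsupp.sum_single_one_le_iff]
  refine ⟨fun h d hd hΔd => ?_, fun h d hd => ⟨d.support, h hd, subset_rfl⟩⟩
  obtain ⟨s, hs, hsd⟩ := h d hd
  exact hs (hΔ hsd hΔd)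

theorem hilbertCoeff_SRIdeal (hΔ : IsLowerSet Δ) (n : ℕ) :
    hilbertCoeff kk (SRIdeal kk Δ) n =
      Nat.card {d : V →₀ ℕ // d.degree = n ∧ d.support ∈ Δ} := by
  set f := (Ideal.Quotient.mkₐ kk (SRIdeal kk Δ)).toLinearMap
  set faceExps := {d : V →₀ ℕ | d.degree = n ∧ d.support ∈ Δ}
  set nonfaceExps := {d : V →₀ ℕ | d.degree = n ∧ d.support ∉ Δ}
  have hker : LinearMap.ker f = restrictSupport kk {d | d.support ∉ Δ} := by
    rw [← restrictScalars_SRIdeal hΔ]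
    ext p
    simp [f, Ideal.Quotient.eq_zero_iff_mem]
  have hhom : homogeneousSubmodule V kk n =
      restrictSupport kk faceExps ⊔ restrictSupport kk nonfaceExps := by
    rw [homogeneousSubmodule_eq_finsupp_supported, ← restrictSupport_union]
    congr 1
    ext d
    simp only [faceExps, nonfaceExps, Set.mem_ofPred_eq, Set.mem_union]
    tauto
  have hface : Disjoint (restrictSupport kk faceExps) (LinearMap.ker f) := by
    rw [hker]
    exact disjoint_restrictSupport
      (Set.disjoint_left.2 fun d (hd : d ∈ faceExps) (hnd : d.support ∉ Δ) => hnd hd.2)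
  have hnonface : restrictSupport kk nonfaceExps ≤ LinearMap.ker f := by
    rw [hker]
    exact restrictSupport_mono kk fun d (hd : d ∈ nonfaceExps) => hd.2
  rw [hilbertCoeff, hhom, Submodule.map_sup, LinearMap.le_ker_iff_map.1 hnonface, sup_bot_eq,
    ← LinearMap.range_domRestrict,
    LinearMap.finrank_range_of_inj (LinearMap.injective_domRestrict_iff.2 hface),
    Module.finrank_eq_nat_card_basis (basisRestrictSupport kk _)]
  rfl

theorem natCard_degree_eq_and_support_mem [DecidableEq V] [DecidablePred (· ∈ Δ)]
    {W : Finset V} (hW : ∀ s ∈ Δ, s ⊆ W) (n : ℕ) :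
    Nat.card {d : V →₀ ℕ // d.degree = n ∧ d.support ∈ Δ} =
      #((W.finsuppAntidiag n).filter (·.support ∈ Δ)) := by
  have hset : {d : V →₀ ℕ | d.degree = n ∧ d.support ∈ Δ} =
      ↑((W.finsuppAntidiag n).filter (·.support ∈ Δ)) := by
    ext d
    simp only [Set.mem_ofPred_eq, coe_filter, mem_finsuppAntidiag']
    exact ⟨fun ⟨hd, hΔ⟩ => ⟨⟨hd, hW _ hΔ⟩, hΔ⟩, fun ⟨⟨hd, _⟩, hΔ⟩ => ⟨hd, hΔ⟩⟩
  rw [← Set.ncard_coe_finset, ← hset, ← Nat.card_coe_set_eq]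
  rfl

end StanleyReisner

namespace QuasiForest

variable {V : Type*} [DecidableEq V] {k : ℕ} (Q : QuasiForest V k)

theorem isLowerSet_faces : IsLowerSet Q.faces :=
  fun _ _ hts ⟨i, hs⟩ => ⟨i, hts.trans hs⟩

theorem F_subset_verts (i : Fin k) : Q.F i ⊆ Q.verts :=
  subset_biUnion_of_mem Q.F (mem_univ i)

theorem G_subset_verts (i : Fin k) : Q.G i ⊆ Q.verts :=
  inter_subset_right.trans (Q.F_subset_verts i)

theorem subset_verts_of_mem_faces {s : Finset V} (hs : s ∈ Q.faces) : s ⊆ Q.verts :=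
  let ⟨i, hi⟩ := hs
  hi.trans (Q.F_subset_verts i)

theorem pos_and_subset_G_iff {s : Finset V} {i : Fin k} :
    0 < (i : ℕ) ∧ s ⊆ Q.G i ↔ s ⊆ Q.F i ∧ ∃ j < i, s ⊆ Q.F j := by
  constructor
  · rintro ⟨hi, hs⟩
    obtain ⟨j, hji, hj⟩ := Q.attach i hi
    exact ⟨hs.trans inter_subset_right, j, hji, hs.trans hj⟩
  · rintro ⟨hs, j, hji, hj⟩
    refine ⟨Nat.zero_lt_of_lt (show (j : ℕ) < i from hji), subset_inter ?_ hs⟩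
    exact hj.trans (subset_biUnion_of_mem Q.F (by simpa using hji))

theorem card_filter_subset_F (s : Finset V) [Decidable (s ∈ Q.faces)] :
    #{i | s ⊆ Q.F i} = #{i : Fin k | 0 < (i : ℕ) ∧ s ⊆ Q.G i} + if s ∈ Q.faces then 1 else 0 := by
  set A : Finset (Fin k) := {i | s ⊆ Q.F i}
  have hG : ({i | 0 < (i : ℕ) ∧ s ⊆ Q.G i} : Finset (Fin k)) = A.filter (∃ j ∈ A, j < ·) := by
    ext i
    simp [A, Q.pos_and_subset_G_iff, and_comm]
  rw [hG]
  by_cases hs : s ∈ Q.faces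
  · have hA : A.Nonempty := let ⟨i, hi⟩ := hs; ⟨i, by simpa [A] using hi⟩
    rw [filter_exists_lt_eq_erase_min' hA, card_erase_of_mem (A.min'_mem hA), if_pos hs,
      Nat.sub_add_cancel (card_pos.2 hA)]
  · have hA : A = ∅ := filter_eq_empty_iff.2 fun i _ hi => hs ⟨i, hi⟩
    simp [hA, hs]

theorem sum_card_filter_subset_F {α : Type*} (f : α → Finset V) (U : Finset α)
    [DecidablePred (· ∈ Q.faces)] :
    ∑ i, #(U.filter (f · ⊆ Q.F i)) =
      ∑ i ∈ univ.filter (fun i : Fin k => 0 < (i : ℕ)), #(U.filter (f · ⊆ Q.G i)) +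
        #(U.filter (f · ∈ Q.faces)) := by
  have hG := sum_card_bipartiteAbove_eq_sum_card_bipartiteBelow
    (s := univ.filter fun i : Fin k => 0 < (i : ℕ)) (t := U) (r := fun i u => f u ⊆ Q.G i)
  simp only [bipartiteAbove, bipartiteBelow, filter_filter] at hG
  calc ∑ i, #(U.filter (f · ⊆ Q.F i))
      = ∑ u ∈ U, #{i | f u ⊆ Q.F i} :=
        sum_card_bipartiteAbove_eq_sum_card_bipartiteBelow (r := fun i u => f u ⊆ Q.F i)
    _ = ∑ u ∈ U, (#{i : Fin k | 0 < (i : ℕ) ∧ f u ⊆ Q.G i} + if f u ∈ Q.faces then 1 else 0) :=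
        sum_congr rfl fun u _ => Q.card_filter_subset_F (f u)
    _ = _ := by rw [sum_add_distrib, sum_boole, Nat.cast_id, hG]

end QuasiForest

open PowerSeries in
theorem hilbertSeries_quasiForest_general (kk : Type*) [Field kk] {V : Type*} [DecidableEq V]
    {k : ℕ} (Q : QuasiForest V k) :
    hilbertSeries kk (SRIdeal kk Q.faces) =
      (∑ i : Fin k, ((1 - PowerSeries.X : PowerSeries ℚ))⁻¹ ^ (Q.F i).card) -
      (∑ i ∈ Finset.univ.filter (fun i : Fin k => 0 < (i : ℕ)),
        ((1 - PowerSeries.X : PowerSeries ℚ))⁻¹ ^ (Q.G i).card) := by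
  classical
  ext n
  rw [hilbertSeries, coeff_mk, hilbertCoeff_SRIdeal Q.isLowerSet_faces,
    natCard_degree_eq_and_support_mem (fun _ => Q.subset_verts_of_mem_faces), map_sub, map_sum,
    map_sum, eq_sub_iff_add_eq]
  simp only [coeff_inv_one_sub_pow_card, finsuppAntidiag_eq_filter_of_subset (Q.F_subset_verts _),
    finsuppAntidiag_eq_filter_of_subset (Q.G_subset_verts _)]
  norm_cast
  rw [Q.sum_card_filter_subset_F, add_comm]

open PowerSeries in
/-- the Hilbert series of the Stanley–Reisner ring of a quasi-forest
`F = F₁ ∪ ⋯ ∪ F_k` equals `∑ᵢ 1/(1-t)^(dᵢ+1) − ∑_{i≥2} 1/(1-t)^(rᵢ+1)`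
(here `dᵢ + 1 = card (F i)` and `rᵢ + 1 = card (G i)`). -/
theorem hilbertSeries_quasiForest (kk : Type*) [Field kk] {V : Type*} [DecidableEq V]
    {k : ℕ} (hk : 1 ≤ k) (Q : QuasiForest V k) :
    hilbertSeries kk (SRIdeal kk Q.faces) =
      (∑ i : Fin k, ((1 - PowerSeries.X : PowerSeries ℚ))⁻¹ ^ (Q.F i).card) -
      (∑ i ∈ Finset.univ.filter (fun i : Fin k => 0 < (i : ℕ)),
        ((1 - PowerSeries.X : PowerSeries ℚ))⁻¹ ^ (Q.G i).card) :=
  hilbertSeries_quasiForest_general kk Q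
end

section
/- If a vertex v of a quasi-forest Δ with at least two facets belongs to facets F_{i_1},…,F_{i_k}, and r = min_i{r_i}, then the number of non-neighbours of v is at most n − (r + 2 + k − 1), where n is the number of vertices of Δ; consequently the degree of v in the complement of the 1-skeleton is at most n − r − 2, with equality only if k = 1 and the unique facet containing v has exactly r + 2 vertices. -/
open Finset

/-!
The non-neighbours of `v` are exactly the vertices outside the union of the facets containing `v`.
Listing those facets in the order of the quasi-forest, the first one has more than `minG` vertices
(every facet strictly contains an attachment face), and each later one brings a vertex not in the
earlier ones: otherwise it would lie in its own attachment face, hence inside an earlier facet.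
So `m` facets through `v` cover at least `minG + m` vertices.
-/

namespace QuasiForest

variable {V : Type*} [DecidableEq V] {k : ℕ} (Q : QuasiForest V k)

lemma minG_le_card_G {i : Fin k} (hi : 0 < (i : ℕ)) : Q.minG ≤ (Q.G i).card :=
  Nat.sInf_le ⟨i, hi, rfl⟩

lemma not_F_subset_biUnion_lt {i : Fin k} (hi : 0 < (i : ℕ)) :
    ¬ Q.F i ⊆ (univ.filter (fun j : Fin k => j < i)).biUnion Q.F := by
  intro hsub
  obtain ⟨j, hji, hG⟩ := Q.attach i hi
  exact Q.facet i j hji.ne' fun x hx => hG (mem_inter.mpr ⟨hsub hx, hx⟩)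

lemma G_ssubset_F {i : Fin k} (hi : 0 < (i : ℕ)) : Q.G i ⊂ Q.F i :=
  inf_lt_right.mpr (Q.not_F_subset_biUnion_lt hi)

lemma minG_lt_card_F (hk : 2 ≤ k) (i : Fin k) : Q.minG < (Q.F i).card := by
  by_cases hi : 0 < (i : ℕ)
  · exact (Q.minG_le_card_G hi).trans_lt (card_lt_card (Q.G_ssubset_F hi))
  · let one : Fin k := ⟨1, hk⟩
    have hi0 : i = ⟨0, by omega⟩ := Fin.ext (Nat.eq_zero_of_not_pos hi)
    have hG : Q.G one ⊆ Q.F i ∩ Q.F one := by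
      intro x hx
      obtain ⟨j, hj, hxj⟩ := mem_biUnion.mp (mem_inter.mp hx).1
      have hj0 : j = i := Fin.ext (by simp [hi0, one, Fin.lt_def] at hj ⊢; omega)
      exact mem_inter.mpr ⟨hj0 ▸ hxj, (mem_inter.mp hx).2⟩
    have hne : i ≠ one := by simp [hi0, one]
    calc Q.minG ≤ (Q.G one).card := Q.minG_le_card_G Nat.one_pos
      _ ≤ (Q.F i ∩ Q.F one).card := card_le_card hG
      _ < (Q.F i).card := card_lt_card (inf_lt_left.mpr (Q.facet i one hne))

lemma minG_add_card_le_card_biUnion (hk : 2 ≤ k) {S : Finset (Fin k)} (hS : S.Nonempty) :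
    Q.minG + S.card ≤ (S.biUnion Q.F).card := by
  induction S using Finset.induction_on_max with
  | empty => exact absurd hS not_nonempty_empty
  | insert a S hlt ih =>
    rw [card_insert_of_notMem fun ha => (hlt a ha).false, biUnion_insert]
    obtain rfl | hS := S.eq_empty_or_nonempty
    · simpa using Q.minG_lt_card_F hk a
    obtain ⟨b, hb⟩ := hS
    have hprev : S.biUnion Q.F ⊆ (univ.filter (fun j : Fin k => j < a)).biUnion Q.F :=
      biUnion_subset_biUnion_of_subset_left _ fun j hj => mem_filter.mpr ⟨mem_univ j, hlt j hj⟩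
    have hnew : S.biUnion Q.F ⊂ Q.F a ∪ S.biUnion Q.F :=
      ssubset_of_subset_of_ne subset_union_right fun h =>
        Q.not_F_subset_biUnion_lt ((Nat.zero_le _).trans_lt (hlt b hb))
          ((h ▸ subset_union_left).trans hprev)
    have := card_lt_card hnew
    have := ih ⟨b, hb⟩
    omega

lemma nonNbrs_eq_sdiff [Fintype V] (v : V) :
    Q.nonNbrs v = Q.verts \ (univ.filter (fun i : Fin k => v ∈ Q.F i)).biUnion Q.F := by
  ext u
  simp only [nonNbrs, faces, verts, mem_filter, mem_erase, mem_sdiff, mem_biUnion, mem_univ,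
    true_and, Set.mem_ofPred_eq, insert_subset_iff, singleton_subset_iff, not_exists, not_and]
  refine ⟨fun h => ⟨h.1.2, h.2⟩, fun ⟨⟨i, hui⟩, hN⟩ => ⟨⟨?_, i, hui⟩, hN⟩⟩
  rintro rfl
  exact hN i hui hui

end QuasiForest

/-- if a vertex `v` of a quasi-forest with at least two facets
belongs to exactly `m` facets, then its number of non-neighbours is at most
`n − (r + 2 + m − 1) = n − minG − m`; consequently its degree in the complement
of the 1-skeleton is at most `n − r − 2 = n − minG − 1`, with equality only if
`m = 1` and the unique facet containing `v` has exactly `r + 2 = minG + 1`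
vertices. -/
theorem nonNbrs_le {V : Type*} [DecidableEq V] {k : ℕ}
    [Fintype V] (hk : 2 ≤ k) (Q : QuasiForest V k) (v : V) (hv : v ∈ Q.verts) :
    (Q.nonNbrs v).card ≤
        Q.verts.card - Q.minG - (Finset.univ.filter (fun i : Fin k => v ∈ Q.F i)).card ∧
    (Q.nonNbrs v).card ≤ Q.verts.card - Q.minG - 1 ∧
    ((Q.nonNbrs v).card = Q.verts.card - Q.minG - 1 →
      (Finset.univ.filter (fun i : Fin k => v ∈ Q.F i)).card = 1 ∧
      ∀ i : Fin k, v ∈ Q.F i → (Q.F i).card = Q.minG + 1) := by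
  set S := univ.filter (fun i : Fin k => v ∈ Q.F i)
  have hS : S.Nonempty := by
    obtain ⟨i, -, hvi⟩ := mem_biUnion.mp hv
    exact ⟨i, mem_filter.mpr ⟨mem_univ i, hvi⟩⟩
  have hN : S.biUnion Q.F ⊆ Q.verts := biUnion_subset_biUnion_of_subset_left _ (subset_univ S)
  have hcard : (Q.nonNbrs v).card = Q.verts.card - (S.biUnion Q.F).card := by
    rw [Q.nonNbrs_eq_sdiff, card_sdiff_of_subset hN]
  have hlower := Q.minG_add_card_le_card_biUnion hk hS
  have hupper := card_le_card hN
  have hS1 := hS.card_pos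
  refine ⟨by omega, by omega, fun heq => ⟨by omega, fun i hvi => ?_⟩⟩
  have hvS : i ∈ S := mem_filter.mpr ⟨mem_univ i, hvi⟩
  have hF : S.biUnion Q.F = Q.F i := by
    rw [eq_singleton_iff_unique_mem.mpr ⟨hvS, fun j hj => card_le_one.mp (by omega) j hj i hvS⟩,
      singleton_biUnion]
  rw [hF] at hlower hupper hcard
  omega
end
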